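/- Proposition 4 (single switching point for the aware firm under constant capacity when demand can never exceed capacity): Suppose Λ·(1 − (u+p)/m) ≤ S. Then for every horizon N and initial reputation R_1 ∈ [0,1], there exists k with 0 ≤ k ≤ N such that the single-switch sequence A^k, defined by A^k_i = H for i ≤ k and A^k_i = L for k < i ≤ N, maximizes the constant-capacity total profit Π_S(·, R_1) over all advertisement sequences in {L,H}^N. In particular, the maximum is attained by a sequence in which no high-level advertisement ever follows a low-level advertisement. -/

import Mathlib

noncomputable section

/-- Post-advertisement reputation map. -/
def frep (α R a : ℝ) : ℝ := R + (1 - R) * a ^ α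

/-- Demand function. -/
def dem (Λ q x : ℝ) : ℝ := if 0 < x then max 0 (Λ * (1 - q / x)) else 0

/-- Constant-capacity reputation trajectory (0-indexed periods), capacity `S`. -/
def repC (α w Λ q S : ℝ) (A : ℕ → ℝ) (R1 : ℝ) : ℕ → ℝ
  | 0 => R1
  | i + 1 =>
      let R' := frep α (repC α w Λ q S A R1 i) (A i)
      let d := dem Λ q R'
      (1 - w) * R' + w * (if 0 < d then min S d / d else R')

/-- Constant-capacity total profit over horizon `N`. -/
def profitC (α w Λ q S p c cA : ℝ) (A : ℕ → ℝ) (R1 : ℝ) (N : ℕ) : ℝ :=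
  ∑ i ∈ Finset.range N,
    (p * min S (dem Λ q (frep α (repC α w Λ q S A R1 i) (A i)))
      - c * S - cA * A i)

/-!
Demand at a reputation `x ≤ 1` is at most `Λ (1 - q) ≤ S`, so capacity never binds and the fill
rate is `1` whenever there is demand. Both reputation updates then act multiplicatively on the gap
`1 - R`: advertising `a` multiplies it by `1 - a^α`, and the fill-rate update by `1 - w` or `1`
according as there is demand or not. Playing `L` then `H` or `H` then `L` thus multiplies the gap
by the same advertising factors, and the fill-rate factor is smaller after `H`; so `H` then `L`
earns at least as much in both periods and ends with a higher reputation. Since profit is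
monotone in reputation, every `L` directly followed by `H` can be swapped, and sorting the
sequence yields a single switch.
-/

open Set

section Exchange

variable {X β : Type*}

def orbit (step : X → β → X) (x : X) (A : ℕ → β) : ℕ → X
  | 0 => x
  | i + 1 => step (orbit step x A i) (A i)

def totalReward (step : X → β → X) (r : X → β → ℝ) (A : ℕ → β) (x : X) (N : ℕ) : ℝ :=
  ∑ i ∈ Finset.range N, r (orbit step x A i) (A i)

def switchSeq (hi lo : β) (k : ℕ) : ℕ → β := fun i => if i < k then hi else lo

variable {step : X → β → X} {r : X → β → ℝ}

theorem orbit_succ_eq_orbit_tail (x : X) (A : ℕ → β) (i : ℕ) :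
    orbit step x A (i + 1) = orbit step (step x (A 0)) (fun j => A (j + 1)) i := by
  induction i with
  | zero => rfl
  | succ i ih => rw [orbit, ih]; rfl

theorem totalReward_succ (A : ℕ → β) (x : X) (N : ℕ) :
    totalReward step r A x (N + 1) =
      r x (A 0) + totalReward step r (fun j => A (j + 1)) (step x (A 0)) N := by
  simp only [totalReward, Finset.sum_range_succ', orbit_succ_eq_orbit_tail]
  rw [add_comm]
  rfl

theorem totalReward_le_of_le [Preorder X] {s : Set X} {acts : Set β}
    (hmaps : ∀ a ∈ acts, MapsTo (step · a) s s)
    (hstep : ∀ a ∈ acts, MonotoneOn (step · a) s) (hr : ∀ a ∈ acts, MonotoneOn (r · a) s)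
    {A : ℕ → β} (hA : ∀ i, A i ∈ acts) {x y : X} (hx : x ∈ s) (hy : y ∈ s) (hxy : x ≤ y)
    (N : ℕ) : totalReward step r A x N ≤ totalReward step r A y N := by
  induction N generalizing A x y with
  | zero => simp [totalReward]
  | succ N ih =>
    rw [totalReward_succ, totalReward_succ]
    gcongr ?_ + ?_
    · exact hr _ (hA 0) hx hy hxy
    · exact ih (fun i => hA (i + 1)) (hmaps _ (hA 0) hx) (hmaps _ (hA 0) hy)
        (hstep _ (hA 0) hx hy hxy)

theorem switchSeq_mem_pair (hi lo : β) (k i : ℕ) : switchSeq hi lo k i ∈ ({lo, hi} : Set β) := by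
  unfold switchSeq
  split_ifs <;> simp

theorem switchSeq_tail (hi lo : β) (k : ℕ) :
    (fun j => switchSeq hi lo (k + 1) (j + 1)) = switchSeq hi lo k := by
  funext j
  simp [switchSeq]

theorem totalReward_update_zero (A : ℕ → β) (a : β) (x : X) (N : ℕ) :
    totalReward step r (Function.update A 0 a) x (N + 1) =
      r x a + totalReward step r (fun j => A (j + 1)) (step x a) N := by
  rw [totalReward_succ, Function.update_self]
  congr 2

theorem totalReward_exchange_le [Preorder X] {s : Set X} {lo hi : β}
    (hmaps : ∀ a ∈ ({lo, hi} : Set β), MapsTo (step · a) s s)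
    (hstep : ∀ a ∈ ({lo, hi} : Set β), MonotoneOn (step · a) s)
    (hr : ∀ a ∈ ({lo, hi} : Set β), MonotoneOn (r · a) s)
    (hswap_step : ∀ x ∈ s, step (step x lo) hi ≤ step (step x hi) lo)
    (hswap_r : ∀ x ∈ s, r x lo + r (step x lo) hi ≤ r x hi + r (step x hi) lo)
    {x : X} (hx : x ∈ s) {A : ℕ → β} (hA : ∀ i, A i ∈ ({lo, hi} : Set β)) (N : ℕ) :
    r x lo + r (step x lo) hi + totalReward step r A (step (step x lo) hi) N ≤
      r x hi + r (step x hi) lo + totalReward step r A (step (step x hi) lo) N := by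
  have hlo : lo ∈ ({lo, hi} : Set β) := mem_insert _ _
  have hhi : hi ∈ ({lo, hi} : Set β) := mem_insert_of_mem _ rfl
  exact add_le_add (hswap_r x hx) (totalReward_le_of_le hmaps hstep hr hA
    (hmaps hi hhi (hmaps lo hlo hx)) (hmaps lo hlo (hmaps hi hhi hx)) (hswap_step x hx) N)

/-- A `lo` directly followed by a `hi` can be exchanged with it without loss, so bubbling every
`hi` to the front never lowers the total reward. -/
theorem exists_switchSeq_totalReward_ge [Preorder X] {s : Set X} {lo hi : β}
    (hmaps : ∀ a ∈ ({lo, hi} : Set β), MapsTo (step · a) s s)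
    (hstep : ∀ a ∈ ({lo, hi} : Set β), MonotoneOn (step · a) s)
    (hr : ∀ a ∈ ({lo, hi} : Set β), MonotoneOn (r · a) s)
    (hswap_step : ∀ x ∈ s, step (step x lo) hi ≤ step (step x hi) lo)
    (hswap_r : ∀ x ∈ s, r x lo + r (step x lo) hi ≤ r x hi + r (step x hi) lo)
    (N : ℕ) {x : X} (hx : x ∈ s) {A : ℕ → β} (hA : ∀ i, A i ∈ ({lo, hi} : Set β)) :
    ∃ k ≤ N, totalReward step r A x N ≤ totalReward step r (switchSeq hi lo k) x N := by
  have hlo : lo ∈ ({lo, hi} : Set β) := mem_insert _ _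
  have hhi : hi ∈ ({lo, hi} : Set β) := mem_insert_of_mem _ rfl
  induction N generalizing x A with
  | zero => exact ⟨0, le_rfl, by simp [totalReward]⟩
  | succ N ih =>
    rw [totalReward_succ]
    rcases hA 0 with h0 | h0 <;> rw [h0]
    · obtain ⟨_ | j, hj, hA'⟩ := ih (hmaps lo hlo hx) (fun i => hA (i + 1))
      · refine ⟨0, by omega, ?_⟩
        rw [totalReward_succ]
        exact add_le_add le_rfl hA'
      obtain ⟨M, rfl⟩ : ∃ M, N = M + 1 := ⟨N - 1, by omega⟩
      set B := Function.update (switchSeq hi lo (j + 1)) 0 lo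
      have hB : ∀ i, B i ∈ ({lo, hi} : Set β) := fun i => by
        simp only [B, Function.update_apply]
        split_ifs
        exacts [hlo, switchSeq_mem_pair hi lo (j + 1) i]
      obtain ⟨k, hk, hBk⟩ := ih (hmaps hi hhi hx) hB
      refine ⟨k + 1, by omega, ?_⟩
      rw [totalReward_succ (N := M + 1), switchSeq_tail]
      calc r x lo + totalReward step r (fun j => A (j + 1)) (step x lo) (M + 1)
          ≤ r x lo + totalReward step r (switchSeq hi lo (j + 1)) (step x lo) (M + 1) :=
            add_le_add le_rfl hA'
        _ = r x lo + r (step x lo) hi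
              + totalReward step r (switchSeq hi lo j) (step (step x lo) hi) M := by
            rw [totalReward_succ, switchSeq_tail, add_assoc]; rfl
        _ ≤ r x hi + r (step x hi) lo
              + totalReward step r (switchSeq hi lo j) (step (step x hi) lo) M :=
            totalReward_exchange_le hmaps hstep hr hswap_step hswap_r hx
              (switchSeq_mem_pair hi lo j) M
        _ = r x hi + totalReward step r B (step x hi) (M + 1) := by
            rw [totalReward_update_zero, switchSeq_tail, add_assoc]
        _ ≤ r x hi + totalReward step r (switchSeq hi lo k) (step x hi) (M + 1) :=
            add_le_add le_rfl hBk
    · obtain ⟨k, hk, hA'⟩ := ih (hmaps hi hhi hx) (fun i => hA (i + 1))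
      refine ⟨k + 1, by omega, ?_⟩
      rw [totalReward_succ, switchSeq_tail]
      exact add_le_add le_rfl hA'

theorem exists_switchSeq_forall_totalReward_ge [Preorder X] {s : Set X} {lo hi : β}
    (hmaps : ∀ a ∈ ({lo, hi} : Set β), MapsTo (step · a) s s)
    (hstep : ∀ a ∈ ({lo, hi} : Set β), MonotoneOn (step · a) s)
    (hr : ∀ a ∈ ({lo, hi} : Set β), MonotoneOn (r · a) s)
    (hswap_step : ∀ x ∈ s, step (step x lo) hi ≤ step (step x hi) lo)
    (hswap_r : ∀ x ∈ s, r x lo + r (step x lo) hi ≤ r x hi + r (step x hi) lo)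
    (N : ℕ) {x : X} (hx : x ∈ s) :
    ∃ k ≤ N, ∀ A : ℕ → β, (∀ i, A i ∈ ({lo, hi} : Set β)) →
      totalReward step r A x N ≤ totalReward step r (switchSeq hi lo k) x N := by
  obtain ⟨k, hk, hmax⟩ := Finset.exists_max_image (Finset.range (N + 1))
    (fun k => totalReward step r (switchSeq hi lo k) x N) ⟨0, by simp⟩
  refine ⟨k, Nat.lt_succ_iff.1 (Finset.mem_range.1 hk), fun A hA => ?_⟩
  obtain ⟨j, hj, hAj⟩ :=
    exists_switchSeq_totalReward_ge hmaps hstep hr hswap_step hswap_r N hx hA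
  exact hAj.trans (hmax j (Finset.mem_range.2 (Nat.lt_succ_of_le hj)))

end Exchange

section Model

variable {α w Λ q S p c cA : ℝ}

theorem one_sub_frep (α R a : ℝ) : 1 - frep α R a = (1 - R) * (1 - a ^ α) := by
  unfold frep
  ring

theorem rpow_mem_Icc_zero_one (hα : 0 ≤ α) {a : ℝ} (ha : a ∈ Icc (0 : ℝ) 1) :
    a ^ α ∈ Icc (0 : ℝ) 1 :=
  ⟨Real.rpow_nonneg ha.1 α, Real.rpow_le_one ha.1 ha.2 hα⟩

theorem frep_mem_Icc (hα : 0 ≤ α) {R a : ℝ} (hR : R ∈ Icc (0 : ℝ) 1) (ha : a ∈ Icc (0 : ℝ) 1) :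
    frep α R a ∈ Icc (0 : ℝ) 1 := by
  have h := one_sub_frep α R a
  obtain ⟨h0, h1⟩ := rpow_mem_Icc_zero_one hα ha
  constructor <;> nlinarith [hR.1, hR.2]

theorem frep_mono_left (hα : 0 ≤ α) {a : ℝ} (ha : a ∈ Icc (0 : ℝ) 1) :
    Monotone (frep α · a) := by
  intro R R' hRR'
  have := (rpow_mem_Icc_zero_one hα ha).2
  simp only [frep]
  nlinarith

theorem frep_le_frep_right (hα : 0 ≤ α) {R a b : ℝ} (hR : R ≤ 1) (ha : 0 ≤ a) (hab : a ≤ b) :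
    frep α R a ≤ frep α R b := by
  have := Real.rpow_le_rpow ha hab hα
  simp only [frep]
  nlinarith

theorem dem_mono (hΛ : 0 ≤ Λ) (hq : 0 ≤ q) : Monotone (dem Λ q) := by
  intro x y hxy
  unfold dem
  split_ifs with hx hy hy
  · gcongr
  · linarith
  · exact le_max_left _ _
  · exact le_rfl

theorem dem_pos_iff (hΛ : 0 < Λ) (hq : 0 ≤ q) {x : ℝ} : 0 < dem Λ q x ↔ q < x := by
  unfold dem
  split_ifs with hx
  · rw [lt_max_iff, mul_pos_iff_of_pos_left hΛ, sub_pos, div_lt_one hx]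
    simp
  · simp only [lt_self_iff_false, false_iff, not_lt]
    linarith

theorem dem_le_of_le_one (hΛ : 0 ≤ Λ) (hq : 0 ≤ q) (hS : 0 ≤ S) (hcap : Λ * (1 - q) ≤ S)
    {x : ℝ} (hx : x ≤ 1) : dem Λ q x ≤ S := by
  unfold dem
  split_ifs with hx0
  · refine max_le hS (le_trans ?_ hcap)
    have : q ≤ q / x := le_div_self hq hx0 hx
    nlinarith
  · exact hS

/-- The fraction of the reputation gap `1 - x` kept by the fill-rate update when capacity never
binds (see `one_sub_fillUpdate`). -/
def gapFactor (w q x : ℝ) : ℝ := if q < x then 1 - w else 1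

theorem gapFactor_antitone (hw0 : 0 ≤ w) : Antitone (gapFactor w q) := by
  intro x y hxy
  unfold gapFactor
  split_ifs with hy hx hx <;> linarith

theorem gapFactor_mem_Icc (hw0 : 0 ≤ w) (hw1 : w ≤ 1) (x : ℝ) :
    gapFactor w q x ∈ Icc (0 : ℝ) 1 := by
  unfold gapFactor
  split_ifs <;> constructor <;> linarith

def fillUpdate (w Λ q S x : ℝ) : ℝ :=
  (1 - w) * x + w * (if 0 < dem Λ q x then min S (dem Λ q x) / dem Λ q x else x)

def stepC (α w Λ q S R a : ℝ) : ℝ := fillUpdate w Λ q S (frep α R a)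

def rewardC (α Λ q S p c cA R a : ℝ) : ℝ := p * min S (dem Λ q (frep α R a)) - c * S - cA * a

theorem repC_eq_orbit (α w Λ q S : ℝ) (A : ℕ → ℝ) (R1 : ℝ) :
    repC α w Λ q S A R1 = orbit (stepC α w Λ q S) R1 A := by
  funext i
  induction i with
  | zero => rfl
  | succ i ih => rw [orbit, ← ih]; rfl

theorem profitC_eq_totalReward (α w Λ q S p c cA : ℝ) (A : ℕ → ℝ) (R1 : ℝ) (N : ℕ) :
    profitC α w Λ q S p c cA A R1 N =
      totalReward (stepC α w Λ q S) (rewardC α Λ q S p c cA) A R1 N := by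
  rw [profitC, totalReward, repC_eq_orbit]
  rfl

theorem one_sub_fillUpdate (hΛ : 0 < Λ) (hq : 0 ≤ q) (hdem : ∀ x ≤ 1, dem Λ q x ≤ S)
    {x : ℝ} (hx : x ≤ 1) : 1 - fillUpdate w Λ q S x = (1 - x) * gapFactor w q x := by
  unfold fillUpdate gapFactor
  simp only [← dem_pos_iff hΛ hq]
  split_ifs with hd
  · rw [min_eq_right (hdem x hx), div_self hd.ne']
    ring
  · ring

theorem fillUpdate_monotoneOn (hw0 : 0 ≤ w) (hw1 : w ≤ 1) (hΛ : 0 < Λ) (hq : 0 ≤ q)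
    (hdem : ∀ x ≤ 1, dem Λ q x ≤ S) : MonotoneOn (fillUpdate w Λ q S) (Iic 1) := by
  intro x hx y hy hxy
  have key : (1 - y) * gapFactor w q y ≤ (1 - x) * gapFactor w q x :=
    mul_le_mul (by linarith) (gapFactor_antitone hw0 hxy) (gapFactor_mem_Icc hw0 hw1 y).1
      (by linarith [mem_Iic.1 hx])
  linarith [one_sub_fillUpdate (w := w) hΛ hq hdem hx, one_sub_fillUpdate (w := w) hΛ hq hdem hy]

theorem one_sub_stepC (hα : 0 ≤ α) (hΛ : 0 < Λ) (hq : 0 ≤ q) (hdem : ∀ x ≤ 1, dem Λ q x ≤ S)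
    {R a : ℝ} (hR : R ∈ Icc (0 : ℝ) 1) (ha : a ∈ Icc (0 : ℝ) 1) :
    1 - stepC α w Λ q S R a = (1 - R) * (1 - a ^ α) * gapFactor w q (frep α R a) := by
  rw [stepC, one_sub_fillUpdate hΛ hq hdem (frep_mem_Icc hα hR ha).2, one_sub_frep]

theorem stepC_mapsTo (hα : 0 ≤ α) (hw0 : 0 ≤ w) (hw1 : w ≤ 1) (hΛ : 0 < Λ) (hq : 0 ≤ q)
    (hdem : ∀ x ≤ 1, dem Λ q x ≤ S) {a : ℝ} (ha : a ∈ Icc (0 : ℝ) 1) :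
    MapsTo (stepC α w Λ q S · a) (Icc 0 1) (Icc 0 1) := by
  intro R hR
  have hx := frep_mem_Icc hα hR ha
  have hstep := one_sub_fillUpdate (w := w) hΛ hq hdem hx.2
  obtain ⟨hθ0, hθ1⟩ := gapFactor_mem_Icc hw0 hw1 (q := q) (frep α R a)
  simp only [stepC, mem_Icc]
  constructor <;> nlinarith [hx.1, hx.2]

theorem stepC_monotoneOn (hα : 0 ≤ α) (hw0 : 0 ≤ w) (hw1 : w ≤ 1) (hΛ : 0 < Λ) (hq : 0 ≤ q)
    (hdem : ∀ x ≤ 1, dem Λ q x ≤ S) {a : ℝ} (ha : a ∈ Icc (0 : ℝ) 1) :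
    MonotoneOn (stepC α w Λ q S · a) (Icc 0 1) := fun _ hR _ hR' hRR' =>
  fillUpdate_monotoneOn hw0 hw1 hΛ hq hdem (frep_mem_Icc hα hR ha).2 (frep_mem_Icc hα hR' ha).2
    (frep_mono_left hα ha hRR')

theorem frep_stepC_le_frep_stepC (hα : 0 ≤ α) (hw0 : 0 ≤ w) (hΛ : 0 < Λ) (hq : 0 ≤ q)
    (hdem : ∀ x ≤ 1, dem Λ q x ≤ S) {L H R : ℝ} (hL : L ∈ Icc (0 : ℝ) 1)
    (hH : H ∈ Icc (0 : ℝ) 1) (hLH : L ≤ H) (hR : R ∈ Icc (0 : ℝ) 1) :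
    frep α (stepC α w Λ q S R L) H ≤ frep α (stepC α w Λ q S R H) L := by
  have hθ : gapFactor w q (frep α R H) ≤ gapFactor w q (frep α R L) :=
    gapFactor_antitone hw0 (frep_le_frep_right hα hR.2 hL.1 hLH)
  have hgap : 0 ≤ (1 - R) * (1 - L ^ α) * (1 - H ^ α) := by
    have := (rpow_mem_Icc_zero_one hα hL).2
    have := (rpow_mem_Icc_zero_one hα hH).2
    have := hR.2
    positivity
  rw [← sub_le_sub_iff_left 1, one_sub_frep, one_sub_frep, one_sub_stepC hα hΛ hq hdem hR hH,
    one_sub_stepC hα hΛ hq hdem hR hL]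
  calc (1 - R) * (1 - H ^ α) * gapFactor w q (frep α R H) * (1 - L ^ α)
      = (1 - R) * (1 - L ^ α) * (1 - H ^ α) * gapFactor w q (frep α R H) := by ring
    _ ≤ (1 - R) * (1 - L ^ α) * (1 - H ^ α) * gapFactor w q (frep α R L) :=
        mul_le_mul_of_nonneg_left hθ hgap
    _ = (1 - R) * (1 - L ^ α) * gapFactor w q (frep α R L) * (1 - H ^ α) := by ring

theorem stepC_stepC_le_stepC_stepC (hα : 0 ≤ α) (hw0 : 0 ≤ w) (hw1 : w ≤ 1) (hΛ : 0 < Λ)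
    (hq : 0 ≤ q) (hdem : ∀ x ≤ 1, dem Λ q x ≤ S) {L H R : ℝ} (hL : L ∈ Icc (0 : ℝ) 1)
    (hH : H ∈ Icc (0 : ℝ) 1) (hLH : L ≤ H) (hR : R ∈ Icc (0 : ℝ) 1) :
    stepC α w Λ q S (stepC α w Λ q S R L) H ≤ stepC α w Λ q S (stepC α w Λ q S R H) L :=
  fillUpdate_monotoneOn hw0 hw1 hΛ hq hdem
    (frep_mem_Icc hα (stepC_mapsTo hα hw0 hw1 hΛ hq hdem hL hR) hH).2
    (frep_mem_Icc hα (stepC_mapsTo hα hw0 hw1 hΛ hq hdem hH hR) hL).2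
    (frep_stepC_le_frep_stepC hα hw0 hΛ hq hdem hL hH hLH hR)

theorem rewardC_mono (hp : 0 ≤ p) (hα : 0 ≤ α) (hΛ : 0 ≤ Λ) (hq : 0 ≤ q) {a : ℝ}
    (ha : a ∈ Icc (0 : ℝ) 1) : Monotone (rewardC α Λ q S p c cA · a) := by
  intro R R' hRR'
  have := dem_mono hΛ hq (frep_mono_left hα ha hRR')
  simp only [rewardC]
  gcongr

theorem rewardC_add_rewardC_le (hp : 0 ≤ p) (hα : 0 ≤ α) (hw0 : 0 ≤ w) (hΛ : 0 < Λ)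
    (hq : 0 ≤ q) (hdem : ∀ x ≤ 1, dem Λ q x ≤ S) {L H R : ℝ} (hL : L ∈ Icc (0 : ℝ) 1)
    (hH : H ∈ Icc (0 : ℝ) 1) (hLH : L ≤ H) (hR : R ∈ Icc (0 : ℝ) 1) :
    rewardC α Λ q S p c cA R L + rewardC α Λ q S p c cA (stepC α w Λ q S R L) H ≤
      rewardC α Λ q S p c cA R H + rewardC α Λ q S p c cA (stepC α w Λ q S R H) L := by
  have hfirst := dem_mono hΛ.le hq (frep_le_frep_right hα hR.2 hL.1 hLH)
  have hsecond := dem_mono hΛ.le hq (frep_stepC_le_frep_stepC hα hw0 hΛ hq hdem hL hH hLH hR)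
  have := mul_le_mul_of_nonneg_left (min_le_min_left S hfirst) hp
  have := mul_le_mul_of_nonneg_left (min_le_min_left S hsecond) hp
  simp only [rewardC]
  linarith

end Model

theorem single_switching_point_constant_capacity_general
    (Λ c p cA m u α w L H S q : ℝ) (N : ℕ)
    (hΛ : 0 < Λ) (hc : 0 < c) (hcp : c < p)
    (hm : 0 < m) (hu : 0 ≤ u) (hqdef : q = (u + p) / m)
    (hα : 0 < α) (hw0 : 0 ≤ w) (hw1 : w ≤ 1)
    (hL0 : 0 ≤ L) (hLH : L < H) (hH1 : H ≤ 1)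
    (hS0 : 0 < S)
    (hcap : Λ * (1 - (u + p) / m) ≤ S)
    (R1 : ℝ) (hR10 : 0 ≤ R1) (hR11 : R1 ≤ 1) :
    ∃ k ≤ N, ∀ A : ℕ → ℝ, (∀ i, A i = L ∨ A i = H) →
      profitC α w Λ q S p c cA A R1 N ≤
        profitC α w Λ q S p c cA (fun i => if i < k then H else L) R1 N := by
  have hp : 0 ≤ p := (hc.trans hcp).le
  have hq : 0 ≤ q := hqdef ▸ div_nonneg (by linarith) hm.le
  have hdem : ∀ x ≤ 1, dem Λ q x ≤ S := fun x hx =>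
    dem_le_of_le_one hΛ.le hq hS0.le (hqdef ▸ hcap) hx
  have hacts : ({L, H} : Set ℝ) ⊆ Icc 0 1 := by
    rintro a (rfl | rfl) <;> constructor <;> linarith
  have hL : L ∈ Icc (0 : ℝ) 1 := hacts (mem_insert _ _)
  have hH : H ∈ Icc (0 : ℝ) 1 := hacts (mem_insert_of_mem _ rfl)
  simp only [profitC_eq_totalReward]
  exact exists_switchSeq_forall_totalReward_ge
    (fun _ ha => stepC_mapsTo hα.le hw0 hw1 hΛ hq hdem (hacts ha))
    (fun _ ha => stepC_monotoneOn hα.le hw0 hw1 hΛ hq hdem (hacts ha))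
    (fun _ ha => (rewardC_mono hp hα.le hΛ.le hq (hacts ha)).monotoneOn _)
    (fun _ hR => stepC_stepC_le_stepC_stepC hα.le hw0 hw1 hΛ hq hdem hL hH hLH.le hR)
    (fun _ hR => rewardC_add_rewardC_le hp hα.le hw0 hΛ hq hdem hL hH hLH.le hR)
    N ⟨hR10, hR11⟩

/-- Proposition 4: under constant capacity, if demand can never exceed the
capacity, the aware firm has an optimal single-switch advertisement sequence
(`H` in the first `k` periods, `L` afterwards). -/
theorem single_switching_point_constant_capacity
    (Λ c p cA m u α w L H S q : ℝ) (N : ℕ)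
    (hΛ : 0 < Λ) (hc : 0 < c) (hcp : c < p) (hcA : 0 ≤ cA)
    (hm : 0 < m) (hu : 0 ≤ u) (hqdef : q = (u + p) / m) (hq1 : q < 1)
    (hα : 0 < α) (hw0 : 0 ≤ w) (hw1 : w ≤ 1)
    (hL0 : 0 ≤ L) (hLH : L < H) (hH1 : H ≤ 1)
    (hS0 : 0 < S) (hSΛ : S ≤ Λ)
    (hcap : Λ * (1 - (u + p) / m) ≤ S)
    (R1 : ℝ) (hR10 : 0 ≤ R1) (hR11 : R1 ≤ 1) :
    ∃ k ≤ N, ∀ A : ℕ → ℝ, (∀ i, A i = L ∨ A i = H) →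
      profitC α w Λ q S p c cA A R1 N ≤
        profitC α w Λ q S p c cA (fun i => if i < k then H else L) R1 N :=
  single_switching_point_constant_capacity_general Λ c p cA m u α w L H S q N hΛ hc hcp hm hu hqdef
    hα hw0 hw1 hL0 hLH hH1 hS0 hcap R1 hR10 hR11
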